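/- Let β ∈ ℝ and let u : ℝ → ℝ be four times continuously differentiable with u''''(x) + β² u''(x) + e^{u(x)} − 1 = 0 for all x ∈ ℝ. Assume u, u′, u″ are square-integrable on ℝ, the function (e^{u} − 1)u is integrable on ℝ, and u(x), u′(x), u″(x), u‴(x) all tend to 0 as x → ±∞. Then ∫_ℝ (u″)² dx − β² ∫_ℝ (u′)² dx + ∫_ℝ (e^{u(x)} − 1) u(x) dx = 0. -/

import Mathlib

open MeasureTheory Real Filter
open scoped Topology

/-!
Multiply the equation by `u` and integrate. The two derivative terms are integrated by parts
through the primitives `(u' u)' = u'' u + u'²` and `(u''' u - u'' u')' = u'''' u - u''²`, which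
vanish at `±∞`. The product `u'' u` is integrable as a product of two `L²` functions, and then
`u'''' u` is integrable by the equation itself.
-/

theorem ContDiff.hasDerivAt_iteratedDeriv {𝕜 F : Type*} [NontriviallyNormedField 𝕜]
    [NormedAddCommGroup F] [NormedSpace 𝕜 F] {f : 𝕜 → F} {n : WithTop ℕ∞}
    (hf : ContDiff 𝕜 n f) {k : ℕ} (hk : (k : WithTop ℕ∞) < n) (x : 𝕜) :
    HasDerivAt (iteratedDeriv k f) (iteratedDeriv (k + 1) f x) x := by
  rw [iteratedDeriv_succ]
  exact (hf.differentiable_iteratedDeriv k hk x).hasDerivAt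

theorem MeasureTheory.Integrable.mul_of_integrable_sq {α : Type*} [MeasurableSpace α]
    {μ : Measure α} {f g : α → ℝ} (hf : AEStronglyMeasurable f μ)
    (hg : AEStronglyMeasurable g μ) (hf2 : Integrable (fun x => f x ^ 2) μ)
    (hg2 : Integrable (fun x => g x ^ 2) μ) : Integrable (fun x => f x * g x) μ :=
  ((memLp_two_iff_integrable_sq hf).2 hf2).integrable_mul ((memLp_two_iff_integrable_sq hg).2 hg2)

theorem MeasureTheory.integral_eq_of_hasDerivAt_sub_of_tendsto {E : Type*}
    [NormedAddCommGroup E] [NormedSpace ℝ E] [CompleteSpace E] {F g h : ℝ → E}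
    (hF : ∀ x, HasDerivAt F (g x - h x) x) (hg : Integrable g) (hh : Integrable h)
    (hbot : Tendsto F atBot (𝓝 0)) (htop : Tendsto F atTop (𝓝 0)) :
    ∫ x, g x = ∫ x, h x := by
  have := integral_of_hasDerivAt_of_tendsto hF (hg.sub hh) hbot htop
  rwa [integral_sub hg hh, sub_zero, sub_eq_zero] at this

section IntegrationByParts

variable {u : ℝ → ℝ}

theorem integral_iteratedDeriv_two_mul_self (hu : ContDiff ℝ 2 u)
    (hi : Integrable fun x => iteratedDeriv 2 u x * u x)
    (hi' : Integrable fun x => deriv u x ^ 2)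
    (hbot : Tendsto (fun x => deriv u x * u x) atBot (𝓝 0))
    (htop : Tendsto (fun x => deriv u x * u x) atTop (𝓝 0)) :
    ∫ x, iteratedDeriv 2 u x * u x = -∫ x, deriv u x ^ 2 := by
  have hu₀ (x : ℝ) : HasDerivAt u (deriv u x) x :=
    (hu.differentiable (by norm_num) x).hasDerivAt
  have hu₁ (x : ℝ) : HasDerivAt (deriv u) (iteratedDeriv 2 u x) x := by
    simpa using hu.hasDerivAt_iteratedDeriv (k := 1) (by norm_num) x
  rw [← integral_neg]
  refine integral_eq_of_hasDerivAt_sub_of_tendsto (fun x => ?_) hi hi'.neg hbot htop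
  exact ((hu₁ x).mul (hu₀ x)).congr_deriv (by ring)

theorem integral_iteratedDeriv_four_mul_self (hu : ContDiff ℝ 4 u)
    (hi : Integrable fun x => iteratedDeriv 4 u x * u x)
    (hi' : Integrable fun x => iteratedDeriv 2 u x ^ 2)
    (hbot : Tendsto (fun x => iteratedDeriv 3 u x * u x - iteratedDeriv 2 u x * deriv u x)
      atBot (𝓝 0))
    (htop : Tendsto (fun x => iteratedDeriv 3 u x * u x - iteratedDeriv 2 u x * deriv u x)
      atTop (𝓝 0)) :
    ∫ x, iteratedDeriv 4 u x * u x = ∫ x, iteratedDeriv 2 u x ^ 2 := by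
  have hu₀ (x : ℝ) : HasDerivAt u (deriv u x) x :=
    (hu.differentiable (by norm_num) x).hasDerivAt
  have hu₁ (x : ℝ) : HasDerivAt (deriv u) (iteratedDeriv 2 u x) x := by
    simpa using hu.hasDerivAt_iteratedDeriv (k := 1) (by norm_num) x
  refine integral_eq_of_hasDerivAt_sub_of_tendsto (fun x => ?_) hi hi' hbot htop
  have hu₂ := hu.hasDerivAt_iteratedDeriv (k := 2) (by norm_num) x
  have hu₃ := hu.hasDerivAt_iteratedDeriv (k := 3) (by norm_num) x
  exact ((hu₃.mul (hu₀ x)).sub (hu₂.mul (hu₁ x))).congr_deriv (by ring)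

end IntegrationByParts

/-- Integral identity: if `u'''' + β²u'' + e^u - 1 = 0` on `ℝ`, with `u, u', u''`
square-integrable, `(e^u - 1)u` integrable, and `u, u', u'', u''' → 0` at `±∞`, then
`∫(u'')² - β²∫(u')² + ∫(e^u - 1)u = 0`. -/
theorem stmt15 (β : ℝ) (u : ℝ → ℝ) (hu : ContDiff ℝ 4 u)
    (heq : ∀ x : ℝ, iteratedDeriv 4 u x + β ^ 2 * iteratedDeriv 2 u x
        + Real.exp (u x) - 1 = 0)
    (hi1 : Integrable (fun x : ℝ => (u x) ^ 2))
    (hi2 : Integrable (fun x : ℝ => (deriv u x) ^ 2))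
    (hi3 : Integrable (fun x : ℝ => (iteratedDeriv 2 u x) ^ 2))
    (hi4 : Integrable (fun x : ℝ => (Real.exp (u x) - 1) * u x))
    (hb0 : Tendsto u atBot (nhds 0))
    (hb1 : Tendsto (deriv u) atBot (nhds 0))
    (hb2 : Tendsto (iteratedDeriv 2 u) atBot (nhds 0))
    (hb3 : Tendsto (iteratedDeriv 3 u) atBot (nhds 0))
    (ht0 : Tendsto u atTop (nhds 0))
    (ht1 : Tendsto (deriv u) atTop (nhds 0))
    (ht2 : Tendsto (iteratedDeriv 2 u) atTop (nhds 0))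
    (ht3 : Tendsto (iteratedDeriv 3 u) atTop (nhds 0)) :
    (∫ x : ℝ, (iteratedDeriv 2 u x) ^ 2) - β ^ 2 * (∫ x : ℝ, (deriv u x) ^ 2)
      + (∫ x : ℝ, (Real.exp (u x) - 1) * u x) = 0 := by
  have hu₂u : Integrable fun x => iteratedDeriv 2 u x * u x :=
    .mul_of_integrable_sq
      (hu.continuous_iteratedDeriv 2 (by norm_num)).aestronglyMeasurable
      hu.continuous.aestronglyMeasurable hi3 hi1
  have hu₄u_eq : (fun x => iteratedDeriv 4 u x * u x)
      = fun x => -(β ^ 2 * (iteratedDeriv 2 u x * u x) + (Real.exp (u x) - 1) * u x) := by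
    funext x
    linear_combination u x * heq x
  have hu₄u : Integrable fun x => iteratedDeriv 4 u x * u x := by
    rw [hu₄u_eq]
    exact ((hu₂u.const_mul _).add hi4).neg
  have h₄ := integral_iteratedDeriv_four_mul_self hu hu₄u hi3
    (by simpa using (hb3.mul hb0).sub (hb2.mul hb1))
    (by simpa using (ht3.mul ht0).sub (ht2.mul ht1))
  have h₂ := integral_iteratedDeriv_two_mul_self (hu.of_le (by norm_num)) hu₂u hi2
    (by simpa using hb1.mul hb0) (by simpa using ht1.mul ht0)
  rw [hu₄u_eq, integral_neg, integral_add (hu₂u.const_mul _) hi4, integral_const_mul, h₂]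
    at h₄
  linarith
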